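/- Let G be a finite chordal simple graph on n vertices with maximum degree Δ. Then the treewidth of G is at most Δ, and there exists a set S ⊆ V that is a clique of G, has size at most Δ + 1, and is a (1/2)-balanced separator of G (every connected component of the subgraph induced on V ∖ S has at most n/2 vertices). -/

import Mathlib

open SimpleGraph

/-- A graph is chordal if every cycle of length greater than 3 has a chord. -/
def IsChordal {V : Type u} (G : SimpleGraph V) : Prop :=
  ∀ ⦃v : V⦄ (w : G.Walk v v), w.IsCycle → 3 < w.length →
    ∃ x y : V, x ∈ w.support ∧ y ∈ w.support ∧ G.Adj x y ∧ s(x, y) ∉ w.edges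

/-- A tree decomposition of a graph `G`. -/
structure TreeDecomp {V : Type u} (G : SimpleGraph V) (ι : Type v) where
  tree : SimpleGraph ι
  isTree : tree.IsTree
  bag : ι → Set V
  bag_conn : ∀ v : V, (tree.induce {i | v ∈ bag i}).Connected
  bag_edge : ∀ ⦃u v : V⦄, G.Adj u v → ∃ i, u ∈ bag i ∧ v ∈ bag i

/-- `G` has a tree decomposition of width at most `k`. -/
def HasTreewidthAtMost {V : Type u} (G : SimpleGraph V) (k : ℕ) : Prop :=
  ∃ (ι : Type) (_ : Fintype ι) (D : TreeDecomp G ι), ∀ i : ι, (D.bag i).ncard ≤ k + 1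

/-- The treewidth of `G`: the minimum width over all tree decompositions. -/
noncomputable def treewidth {V : Type u} (G : SimpleGraph V) : ℕ :=
  sInf {k | HasTreewidthAtMost G k}

/-!
Dirac: if `a` and `b` are non-adjacent, let `C` be the component of `b` in `G - N[a]` and `S` the
neighbours of `a` adjacent to `C`. Two non-adjacent vertices of `S` would close a chordless cycle of
length at least four with `a` and a shortest path through `C`, so `S` is a clique separating `a`
from `b`, and induction on the two sides gives non-adjacent simplicial vertices on either side.
Removing a simplicial vertex `v` and attaching the leaf bag `N[v]` to a bag containing the clique
`N(v)` builds a tree decomposition into cliques, each of size at most `Δ + 1`.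
Any tree decomposition has a bag leaving only components of size at most `n / 2`: otherwise every
node points along a tree edge towards a big component, on a finite tree two adjacent nodes point at
each other, and their two big components would be disjoint.
-/
namespace SimpleGraph

variable {V : Type*} {G : SimpleGraph V}

lemma IsClique.ncard_le_maxDegree_add_one [Fintype V] [DecidableRel G.Adj] {S : Set V}
    (hS : G.IsClique S) : S.ncard ≤ G.maxDegree + 1 := by
  obtain rfl | ⟨v, hv⟩ := S.eq_empty_or_nonempty
  · simp
  have hsub : S \ {v} ⊆ G.neighborSet v := fun u hu ↦ hS hv hu.1 (Ne.symm hu.2)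
  calc S.ncard = (S \ {v}).ncard + 1 := (Set.ncard_sdiff_singleton_add_one hv).symm
    _ ≤ (G.neighborSet v).ncard + 1 := by grw [Set.ncard_le_ncard hsub]
    _ = G.degree v + 1 := by
      rw [← Nat.card_coe_set_eq, Nat.card_eq_fintype_card, card_neighborSet_eq_degree]
    _ ≤ G.maxDegree + 1 := by gcongr; exact G.degree_le_maxDegree v

namespace Walk

lemma IsChordless.map {W : Type*} {H : SimpleGraph W} (f : G ↪g H) {u v : V} {p : G.Walk u v}
    (hp : p.IsChordless) : (p.map f.toHom).IsChordless := by
  rw [isChordless_iff_forall_mem_edges] at hp ⊢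
  intro x y hx hy hxy
  simp only [support_map, List.mem_map] at hx hy
  obtain ⟨x, hx, rfl⟩ := hx
  obtain ⟨y, hy, rfl⟩ := hy
  rw [edges_map]
  exact List.mem_map_of_mem (f := Sym2.map f) (hp hx hy (f.map_adj_iff.1 hxy))

lemma isChordless_of_length_eq_dist {u v : V} (p : G.Walk u v) (hp : p.length = G.dist u v) :
    p.IsChordless := by
  rw [isChordless_iff_forall_mem_edges]
  intro x y hx hy hxy
  obtain ⟨i, rfl, hi⟩ := mem_support_iff_exists_getVert.1 hx
  obtain ⟨j, rfl, hj⟩ := mem_support_iff_exists_getVert.1 hy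
  have hdist : ∀ k ≤ p.length, G.dist u (p.getVert k) = k := fun k hk ↦ by
    rw [← length_eq_dist_of_subwalk hp (p.isSubwalk_take k), take_length]
    omega
  rcases hxy.diff_dist_adj (u := u) with h | h | h <;> rw [hdist i hi, hdist j hj] at h
  · exact absurd (by rw [h]) hxy.ne
  · subst h
    exact p.mk_mem_edges_iff_exists.2 ⟨i, by omega, rfl⟩
  · obtain _ | i := i
    · exact absurd (by rw [h]) hxy.ne
    · rw [Nat.add_sub_cancel] at h
      subst h
      exact p.mk_mem_edges_iff_exists.2 ⟨j, by omega, Sym2.eq_swap⟩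

end Walk

end SimpleGraph

namespace IsChordal

variable {V W : Type*} {G : SimpleGraph V}

lemma of_embedding {H : SimpleGraph W} (f : H ↪g G) (hG : IsChordal G) : IsChordal H := by
  intro v w hw hlen
  obtain ⟨x, y, hx, hy, hadj, hne⟩ :=
    hG (w.map f.toHom) (hw.map f.injective) (by rwa [Walk.length_map])
  simp only [Walk.support_map, List.mem_map] at hx hy
  obtain ⟨x, hx, rfl⟩ := hx
  obtain ⟨y, hy, rfl⟩ := hy
  refine ⟨x, y, hx, hy, f.map_adj_iff.1 hadj, fun hc ↦ hne ?_⟩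
  rw [Walk.edges_map]
  exact List.mem_map_of_mem (f := Sym2.map f) hc

lemma induce (hG : IsChordal G) (s : Set V) : IsChordal (G.induce s) :=
  hG.of_embedding (Embedding.induce s)

lemma adj_of_isChordless (hG : IsChordal G) {a x y : V} (hax : G.Adj a x) (hay : G.Adj a y)
    (hxy : x ≠ y) {p : G.Walk x y} (hpath : p.IsPath) (hchord : p.IsChordless)
    (hp : ∀ z ∈ p.support, z = x ∨ z = y ∨ z ∉ insert a (G.neighborSet a)) :
    G.Adj x y := by
  by_contra hnadj
  have ha : a ∉ p.support := fun h ↦ by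
    rcases hp a h with rfl | rfl | h
    · exact hax.ne rfl
    · exact hay.ne rfl
    · exact h (Set.mem_insert _ _)
  have hlen : 2 ≤ p.length := by
    by_contra! hl
    obtain hl | hl : p.length = 0 ∨ p.length = 1 := by omega
    · exact hxy (Walk.eq_of_length_eq_zero hl)
    · exact hnadj (Walk.adj_of_length_eq_one hl)
  set c := Walk.cons hax (p.concat hay.symm)
  have hcycle : c.IsCycle := by
    rw [Walk.cons_isCycle_iff, Walk.concat_isPath_iff, Walk.edges_concat]
    refine ⟨⟨hpath, ha⟩, ?_⟩
    simp only [List.concat_eq_append, List.mem_append, List.mem_singleton, not_or]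
    refine ⟨fun h ↦ ha (p.fst_mem_support_of_mem_edges h), fun h ↦ ?_⟩
    rcases Sym2.eq_iff.1 h with ⟨rfl, -⟩ | ⟨-, rfl⟩
    · exact hay.ne rfl
    · exact hxy rfl
  obtain ⟨u, v, hu, hv, huv, hne⟩ := hG c hcycle (by simp [c]; omega)
  have hmem : ∀ z ∈ c.support, z = a ∨ z ∈ p.support := by
    simp [c, Walk.support_concat]
    tauto
  have hspoke : ∀ z ∈ p.support, G.Adj a z → s(a, z) ∈ c.edges := fun z hz haz ↦ by
    rcases hp z hz with rfl | rfl | h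
    · simp [c]
    · simp [c, Walk.edges_concat, Sym2.eq_swap]
    · exact absurd (Set.mem_insert_of_mem _ haz) h
  rcases hmem u hu with rfl | hu' <;> rcases hmem v hv with rfl | hv'
  · exact huv.ne rfl
  · exact hne (hspoke v hv' huv)
  · exact hne (Sym2.eq_swap ▸ hspoke u hu' huv.symm)
  · exact hne (by simp [c, Walk.edges_concat, hchord.mem_edges hu' hv' huv])

lemma adj_of_walk (hG : IsChordal G) {a x y : V} (hax : G.Adj a x) (hay : G.Adj a y)
    (hxy : x ≠ y) (p : G.Walk x y)
    (hp : ∀ z ∈ p.support, z = x ∨ z = y ∨ z ∉ insert a (G.neighborSet a)) :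
    G.Adj x y := by
  set T := {z | z = x ∨ z = y ∨ z ∉ insert a (G.neighborSet a)}
  obtain ⟨q, hqpath, hqlen⟩ := (p.induce T hp).reachable.exists_path_of_dist
  have hqT : ∀ z ∈ (q.map (Embedding.induce (G := G) T).toHom).support, z ∈ T := by
    simp only [Walk.support_map, List.mem_map]
    rintro _ ⟨z, -, rfl⟩
    exact z.2
  exact hG.adj_of_isChordless hax hay hxy (hqpath.map (Embedding.induce (G := G) T).injective)
    ((q.isChordless_of_length_eq_dist hqlen).map (Embedding.induce T)) hqT

end IsChordal

namespace SimpleGraph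

variable {V : Type*} {G : SimpleGraph V}

def reachAvoiding (G : SimpleGraph V) (X : Set V) (b : V) : Set V :=
  {z | ∃ p : G.Walk b z, ∀ w ∈ p.support, w ∉ X}

section reachAvoiding

variable {X : Set V} {b z w : V}

lemma self_mem_reachAvoiding (hb : b ∉ X) : b ∈ G.reachAvoiding X b :=
  ⟨.nil, by simpa⟩

lemma notMem_of_mem_reachAvoiding (hz : z ∈ G.reachAvoiding X b) : z ∉ X :=
  hz.elim fun p hp ↦ hp z p.end_mem_support

lemma mem_reachAvoiding_of_adj (hz : z ∈ G.reachAvoiding X b) (hzw : G.Adj z w) (hw : w ∉ X) :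
    w ∈ G.reachAvoiding X b := by
  obtain ⟨p, hp⟩ := hz
  refine ⟨p.concat hzw, fun u hu ↦ ?_⟩
  rw [Walk.support_concat, List.mem_append, List.mem_singleton] at hu
  exact hu.elim (hp u) (· ▸ hw)

lemma exists_walk_of_mem_reachAvoiding (hz : z ∈ G.reachAvoiding X b)
    (hw : w ∈ G.reachAvoiding X b) : ∃ p : G.Walk z w, ∀ u ∈ p.support, u ∉ X := by
  obtain ⟨p, hp⟩ := hz
  obtain ⟨q, hq⟩ := hw
  refine ⟨p.reverse.append q, fun u hu ↦ ?_⟩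
  rw [Walk.mem_support_append_iff, Walk.support_reverse, List.mem_reverse] at hu
  exact hu.elim (hp u) (hq u)

end reachAvoiding

lemma Walk.mem_of_closed {X P : Set V}
    (hP : ∀ c ∈ P, ∀ w, G.Adj c w → w ∈ P ∨ w ∈ X) :
    ∀ {z y : V} (p : G.Walk z y), (∀ u ∈ p.support, u ∉ X) → z ∈ P → y ∈ P
  | _, _, .nil, _, hz => hz
  | _, _, .cons h p, hp, hz =>
    p.mem_of_closed hP (fun u hu ↦ hp u (List.mem_cons_of_mem _ hu))
      ((hP _ hz _ h).resolve_right (hp _ (List.mem_cons_of_mem _ p.start_mem_support)))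

def IsSimplicial (G : SimpleGraph V) (v : V) : Prop :=
  G.IsClique (G.neighborSet v)

lemma isSimplicial_top (v : V) : (⊤ : SimpleGraph V).IsSimplicial v :=
  fun _ _ _ _ h ↦ h

lemma IsSimplicial.of_induce {s : Set V} {v : s} (hv : (G.induce s).IsSimplicial v)
    (hN : G.neighborSet v ⊆ s) : G.IsSimplicial v := fun x hx y hy hxy ↦
  hv (x := ⟨x, hN hx⟩) (y := ⟨y, hN hy⟩) hx hy (by simpa [Subtype.ext_iff] using hxy)

lemma exists_isSimplicial_of_closed {S C : Set V} (hS : G.IsClique S) (hC : C.Nonempty)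
    (hclosed : ∀ c ∈ C, ∀ w, G.Adj c w → w ∈ C ∨ w ∈ S)
    (hU : G.induce (C ∪ S) = ⊤ ∨ ∃ x y, x ≠ y ∧ ¬(G.induce (C ∪ S)).Adj x y ∧
      (G.induce (C ∪ S)).IsSimplicial x ∧ (G.induce (C ∪ S)).IsSimplicial y) :
    ∃ x ∈ C, G.IsSimplicial x := by
  have hN : ∀ c ∈ C, G.neighborSet c ⊆ C ∪ S := fun c hc w hw ↦ hclosed c hc w hw
  rcases hU with htop | ⟨x, y, hxy, hnadj, hx, hy⟩
  · obtain ⟨c, hc⟩ := hC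
    exact ⟨c, hc, IsSimplicial.of_induce (v := ⟨c, .inl hc⟩) (htop ▸ isSimplicial_top _)
      (hN c hc)⟩
  have hlift : ∀ z : ↥(C ∪ S), (G.induce (C ∪ S)).IsSimplicial z → (z : V) ∈ S ∨
      ∃ x ∈ C, G.IsSimplicial x := fun z hz ↦ z.2.symm.imp_right fun hzC ↦
    ⟨z, hzC, hz.of_induce (hN z hzC)⟩
  rcases hlift x hx with hxS | h
  · rcases hlift y hy with hyS | h
    · exact absurd (hS hxS hyS (fun h ↦ hxy (Subtype.ext h))) hnadj
    · exact h
  · exact h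

end SimpleGraph

namespace IsChordal

variable {V : Type*} {G : SimpleGraph V}

lemma isClique_of_reachAvoiding (hG : IsChordal G) (a b : V) :
    G.IsClique {s ∈ G.neighborSet a |
      ∃ c ∈ G.reachAvoiding (insert a (G.neighborSet a)) b, G.Adj s c} := by
  rintro x ⟨hax, c, hc, hxc⟩ y ⟨hay, d, hd, hyd⟩ hxy
  obtain ⟨q, hq⟩ := exists_walk_of_mem_reachAvoiding hc hd
  refine hG.adj_of_walk hax hay hxy (.cons hxc (q.concat hyd.symm)) fun z hz ↦ ?_
  rw [Walk.support_cons, Walk.support_concat, List.mem_cons, List.mem_append,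
    List.mem_singleton] at hz
  rcases hz with rfl | hz | rfl
  · exact .inl rfl
  · exact .inr (.inr (hq z hz))
  · exact .inr (.inl rfl)

theorem eq_top_or_exists_isSimplicial_pair [Finite V] (hG : IsChordal G) :
    G = ⊤ ∨ ∃ x y, x ≠ y ∧ ¬G.Adj x y ∧ G.IsSimplicial x ∧ G.IsSimplicial y := by
  induction hn : Nat.card V using Nat.strong_induction_on generalizing V with
  | _ n ih =>
  refine or_iff_not_imp_left.2 fun htop ↦ ?_
  obtain ⟨a, b, hab, hnadj⟩ : ∃ a b, a ≠ b ∧ ¬G.Adj a b := by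
    by_contra! h
    exact htop (eq_top_iff.2 fun a b hab ↦ h a b hab)
  set N := insert a (G.neighborSet a)
  set C := G.reachAvoiding N b
  set S := {s ∈ G.neighborSet a | ∃ c ∈ C, G.Adj s c}
  set D := G.reachAvoiding S a
  have hCN : ∀ c ∈ C, c ∉ N := fun c hc ↦ notMem_of_mem_reachAvoiding hc
  have hC : ∀ c ∈ C, ∀ w, G.Adj c w → w ∈ C ∨ w ∈ S := by
    intro c hc w hcw
    by_cases hw : w ∈ N
    · refine .inr ⟨?_, c, hc, hcw.symm⟩
      rcases hw with rfl | hw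
      · exact absurd (Set.mem_insert_of_mem _ hcw.symm) (hCN c hc)
      · exact hw
    · exact .inl (mem_reachAvoiding_of_adj hc hcw hw)
  have hD : ∀ d ∈ D, ∀ w, G.Adj d w → w ∈ D ∨ w ∈ S := fun d hd w hdw ↦
    (em (w ∈ S)).symm.imp_left (mem_reachAvoiding_of_adj hd hdw)
  have hDC : ∀ z ∈ D, z ∉ C := by
    rintro z ⟨p, hp⟩ hz
    exact hCN a (p.reverse.mem_of_closed hC (by simpa using hp) hz) (Set.mem_insert _ _)
  have hside : ∀ P : Set V, ∀ o ∉ P ∪ S, P.Nonempty →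
      (∀ c ∈ P, ∀ w, G.Adj c w → w ∈ P ∨ w ∈ S) → ∃ x ∈ P, G.IsSimplicial x :=
    fun P o ho hP hPc ↦ exists_isSimplicial_of_closed (hG.isClique_of_reachAvoiding a b) hP hPc
      (ih _ (hn ▸ Finite.card_subtype_lt ho) (hG.induce _) rfl)
  have haS : a ∉ S := fun h ↦ h.1.ne rfl
  have hbC : b ∈ C := self_mem_reachAvoiding (by rintro (rfl | h) <;> tauto)
  obtain ⟨x, hxD, hx⟩ := hside D b (by rintro (h | h); exacts [hDC b h hbC, hnadj h.1])
    ⟨a, self_mem_reachAvoiding haS⟩ hD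
  obtain ⟨y, hyC, hy⟩ := hside C a
    (by rintro (h | h); exacts [hCN a h (Set.mem_insert _ _), haS h]) ⟨b, hbC⟩ hC
  refine ⟨x, y, fun h ↦ hDC x hxD (h ▸ hyC), fun hxy ↦ ?_, hx, hy⟩
  rcases hC y hyC x hxy.symm with h | h
  · exact hDC x hxD h
  · exact notMem_of_mem_reachAvoiding hxD h

end IsChordal

namespace SimpleGraph

variable {V W ι : Type*} {G : SimpleGraph V} {T : SimpleGraph ι} {i j k x : ι}

def branch (T : SimpleGraph ι) (i j : ι) : Set ι :=
  {x | (T.deleteEdges {s(i, j)}).Reachable j x}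

lemma self_mem_branch : j ∈ T.branch i j := Reachable.refl _

lemma mem_branch_swap : x ∈ T.branch j i ↔ (T.deleteEdges {s(i, j)}).Reachable i x := by
  rw [branch, Sym2.eq_swap]; rfl

lemma Walk.reachable_deleteEdges_of_notMem_support {y : ι} (p : T.Walk x y)
    (hi : i ∉ p.support) (j : ι) : (T.deleteEdges {s(i, j)}).Reachable x y := by
  refine ⟨p.toDeleteEdges _ fun e he hei ↦ hi ?_⟩
  rw [Set.mem_singleton_iff] at hei
  exact p.fst_mem_support_of_mem_edges (hei ▸ he)

namespace IsAcyclic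

variable (hT : T.IsAcyclic)
include hT

lemma not_reachable_deleteEdges (hij : T.Adj i j) :
    ¬(T.deleteEdges {s(i, j)}).Reachable i j :=
  isBridge_iff.1 (isAcyclic_iff_forall_adj_isBridge.1 hT hij)

lemma notMem_branch (hij : T.Adj i j) : i ∉ T.branch i j :=
  fun h ↦ hT.not_reachable_deleteEdges hij h.symm

lemma disjoint_branch (hij : T.Adj i j) : Disjoint (T.branch i j) (T.branch j i) :=
  Set.disjoint_left.2 fun _ hx hx' ↦
    hT.not_reachable_deleteEdges hij ((mem_branch_swap.1 hx').trans hx.symm)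

lemma branch_subset (hij : T.Adj i j) (hik : T.Adj i k) (hjk : j ≠ k) :
    T.branch i k ⊆ T.branch j i := by
  classical
  rintro x ⟨p⟩
  have hi : i ∉ p.support := fun h ↦ hT.notMem_branch hik ⟨p.takeUntil i h⟩
  have hik' : (T.deleteEdges {s(i, j)}).Adj i k := by
    refine deleteEdges_adj.2 ⟨hik, fun h ↦ ?_⟩
    rcases Sym2.eq_iff.1 h with ⟨-, rfl⟩ | ⟨rfl, -⟩
    exacts [hjk rfl, hij.ne rfl]
  exact mem_branch_swap.2 (hik'.reachable.trans <|
    (p.mapLe (T.deleteEdges_le _)).reachable_deleteEdges_of_notMem_support (by simpa using hi) j)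

lemma eq_of_mem_branch (hij : T.Adj i j) (hik : T.Adj i k) (hj : x ∈ T.branch i j)
    (hk : x ∈ T.branch i k) : j = k :=
  by_contra fun hjk ↦
    Set.disjoint_left.1 (hT.disjoint_branch hij) hj (hT.branch_subset hij hik hjk hk)

end IsAcyclic

lemma Connected.exists_adj_subset_branch (hT : T.Connected) {X : Set ι}
    (hX : (T.induce X).Connected) (hi : i ∉ X) : ∃ j, T.Adj i j ∧ X ⊆ T.branch i j := by
  obtain ⟨⟨x₀, hx₀⟩⟩ := hX.nonempty
  obtain ⟨p, hp, -⟩ := (hT.preconnected i x₀).exists_path_of_dist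
  cases p with
  | nil => exact absurd hx₀ hi
  | cons hij q =>
    rw [Walk.cons_isPath_iff] at hp
    refine ⟨_, hij, fun x hx ↦ ?_⟩
    obtain ⟨r⟩ := hX.preconnected ⟨x₀, hx₀⟩ ⟨x, hx⟩
    have hr : i ∉ (r.map (Embedding.induce X).toHom).support := by
      simp only [Walk.support_map, List.mem_map, not_exists, not_and]
      exact fun z _ hz ↦ hi (hz ▸ z.2)
    exact (q.reachable_deleteEdges_of_notMem_support hp.2 _).trans
      (r.map _ |>.reachable_deleteEdges_of_notMem_support hr _)

theorem IsTree.exists_apply_apply_eq [Finite ι] (hT : T.IsTree) (f : ι → ι)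
    (hf : ∀ i, T.Adj i (f i)) : ∃ i, f (f i) = i := by
  have := hT.connected.nonempty
  obtain ⟨i, hi⟩ := Finite.exists_min fun i ↦ (T.branch i (f i)).ncard
  refine ⟨i, by_contra fun hne ↦ (hi (f i)).not_gt (Set.ncard_lt_ncard ?_)⟩
  have hsub := hT.isAcyclic.branch_subset (hf i).symm (hf (f i)) (Ne.symm hne)
  exact (Set.ssubset_iff_of_subset hsub).2 ⟨f i, self_mem_branch, hT.isAcyclic.notMem_branch (hf _)⟩

lemma Connected.induce_image {H : SimpleGraph W} (f : G →g H) {s : Set V}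
    (h : (G.induce s).Connected) : (H.induce (f '' s)).Connected :=
  h.map (induceHom f (Set.mapsTo_image f s)) <| by
    rintro ⟨_, x, hx, rfl⟩
    exact ⟨⟨x, hx⟩, rfl⟩

lemma IsAcyclic.map (f : V ↪ W) (h : G.IsAcyclic) : (G.map f).IsAcyclic := by
  have hrange : ∀ {u w : W} (p : (G.map f).Walk u w), u ∈ Set.range f →
      ∀ z ∈ p.support, z ∈ Set.range f := by
    intro u w p
    induction p with
    | nil => simp
    | cons hadj p ih =>
      obtain ⟨a, b, -, rfl, rfl⟩ := (map_adj f G _ _).1 hadj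
      simpa using ih ⟨b, rfl⟩
  rintro w (_ | ⟨hadj, p⟩) hc
  · exact hc.not_nil Walk.Nil.nil
  obtain ⟨a, b, -, rfl, -⟩ := (map_adj f G _ _).1 hadj
  set c := Walk.cons hadj p
  have hind : ((G.map f).induce (Set.range f)).IsAcyclic :=
    h.embedding (Embedding.map f G).isoInduceRange.symm.toEmbedding
  refine hind (c.induce (Set.range f) (hrange c (Set.mem_range_self a))) ?_
  rwa [← Walk.isCycle_map_iff_of_injective
    (f := (Embedding.induce (G := G.map f) (Set.range f)).toHom) Subtype.val_injective,
    Walk.map_induce]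

lemma IsTree.map_some_sup_edge (hT : T.IsTree) (i₀ : ι) :
    (T.map Function.Embedding.some ⊔ edge none (some i₀)).IsTree := by
  have hadj : (T.map Function.Embedding.some ⊔ edge none (some i₀)).Adj none (some i₀) := by
    simp [edge_adj]
  refine ⟨(connected_iff_exists_forall_reachable _).2 ⟨some i₀, ?_⟩, ?_⟩
  · rintro (_ | i)
    · exact hadj.reachable.symm
    · exact ((hT.connected.preconnected i₀ i).map (Embedding.map _ T).toHom).mono le_sup_left
  refine (hT.isAcyclic.map _).sup_edge_of_not_reachable ?_
  rintro ⟨_ | ⟨h, -⟩⟩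
  obtain ⟨a, b, -, ha, -⟩ := (map_adj _ _ _ _).1 h
  exact Option.some_ne_none a ha

end SimpleGraph

namespace TreeDecomp

variable {V ι : Type*} {G : SimpleGraph V} (D : TreeDecomp G ι) {i j : ι}

def beyond (i j : ι) : Set V :=
  {v | ∀ x, v ∈ D.bag x → x ∈ D.tree.branch i j}

lemma exists_mem_bag (v : V) : ∃ i, v ∈ D.bag i :=
  let ⟨⟨i, hi⟩⟩ := (D.bag_conn v).nonempty
  ⟨i, hi⟩

lemma exists_adj_mem_beyond {v : V} (hv : v ∉ D.bag i) :
    ∃ j, D.tree.Adj i j ∧ v ∈ D.beyond i j :=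
  D.isTree.connected.exists_adj_subset_branch (D.bag_conn v) hv

lemma disjoint_beyond (hij : D.tree.Adj i j) : Disjoint (D.beyond i j) (D.beyond j i) :=
  Set.disjoint_left.2 fun v hv hv' ↦
    let ⟨x, hx⟩ := D.exists_mem_bag v
    Set.disjoint_left.1 (D.isTree.isAcyclic.disjoint_branch hij) (hv x hx) (hv' x hx)

lemma mem_beyond_of_adj (hij : D.tree.Adj i j) {u w : V} (hu : u ∈ D.beyond i j)
    (huw : G.Adj u w) (hw : w ∉ D.bag i) : w ∈ D.beyond i j := by
  obtain ⟨k, hik, hwk⟩ := D.exists_adj_mem_beyond hw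
  obtain ⟨x, hux, hwx⟩ := D.bag_edge huw
  rwa [D.isTree.isAcyclic.eq_of_mem_branch hij hik (hu x hux) (hwk x hwx)]

lemma exists_supp_subset_beyond (c : (G.induce (D.bag i)ᶜ).ConnectedComponent) :
    ∃ j, D.tree.Adj i j ∧ Subtype.val '' c.supp ⊆ D.beyond i j := by
  induction c using ConnectedComponent.ind with | h v =>
  obtain ⟨j, hij, hv⟩ := D.exists_adj_mem_beyond v.2
  refine ⟨j, hij, ?_⟩
  rintro _ ⟨w, hw, rfl⟩
  rw [ConnectedComponent.mem_supp_iff, ConnectedComponent.eq] at hw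
  have hvw := (reachable_iff_reflTransGen _ _).1 hw.symm
  clear hw
  induction hvw with
  | refl => exact hv
  | @tail _ w _ hadj ih => exact D.mem_beyond_of_adj hij ih hadj w.2

theorem exists_balanced_bag [Finite ι] [Fintype V] :
    ∃ i, ∀ c : (G.induce (D.bag i)ᶜ).ConnectedComponent,
      2 * c.supp.ncard ≤ Fintype.card V := by
  by_contra! h
  choose c hc using h
  choose f hf hsub using fun i ↦ D.exists_supp_subset_beyond (c i)
  obtain ⟨i, hi⟩ := D.isTree.exists_apply_apply_eq f hf
  have hcard : ∀ i, (c i).supp.ncard ≤ (D.beyond i (f i)).ncard := fun i ↦ by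
    rw [← Set.ncard_image_of_injective _ Subtype.val_injective]
    exact Set.ncard_le_ncard (hsub i)
  have hunion := Set.ncard_union_eq (D.disjoint_beyond (hf i))
  have hle := Set.ncard_le_card (D.beyond i (f i) ∪ D.beyond (f i) i)
  rw [Nat.card_eq_fintype_card] at hle
  have hi₁ := hcard i
  have hi₂ := hcard (f i)
  rw [hi] at hi₂
  have := hc i
  have := hc (f i)
  omega

end TreeDecomp

namespace TreeDecomp

variable {V ι : Type*} {G : SimpleGraph V} {v : V}

def extendBag (D : TreeDecomp (G.induce {v}ᶜ) ι) : Option ι → Set V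
  | none => insert v (G.neighborSet v)
  | some i => Subtype.val '' D.bag i

lemma connected_extend (D : TreeDecomp (G.induce {v}ᶜ) ι) {i₀ : ι}
    (hi₀ : G.neighborSet v ⊆ Subtype.val '' D.bag i₀) (u : V) :
    ((D.tree.map Function.Embedding.some ⊔ edge none (some i₀)).induce
      {x | u ∈ D.extendBag x}).Connected := by
  set T' := D.tree.map Function.Embedding.some ⊔ edge none (some i₀)
  let φ : D.tree →g T' := (Hom.ofLE le_sup_left).comp (Embedding.map _ _).toHom
  by_cases huv : u = v
  · subst huv
    have : {x | u ∈ D.extendBag x} = {none} := by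
      ext (_ | i) <;> simp [extendBag]
    rw [this, induce_singleton_eq_top]
    exact connected_top
  set w : ↥({v}ᶜ : Set V) := ⟨u, huv⟩
  have hsome : ∀ i, u ∈ D.extendBag (some i) ↔ w ∈ D.bag i := by
    simp [extendBag, w, huv]
  by_cases huN : u ∈ G.neighborSet v
  · have : {x | u ∈ D.extendBag x} = {none} ∪ some '' {i | w ∈ D.bag i} := by
      ext (_ | i)
      · simp [extendBag, huN]
      · simp [hsome]
    rw [this]
    obtain ⟨w', hw', hw'u⟩ := hi₀ huN
    obtain rfl : w' = w := Subtype.ext hw'u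
    exact connected_induce_union .of_subsingleton ((D.bag_conn w).induce_image φ).preconnected
      rfl ⟨i₀, hw', rfl⟩ (by simp [T', edge_adj])
  · have : {x | u ∈ D.extendBag x} = some '' {i | w ∈ D.bag i} := by
      ext (_ | i)
      · simp [extendBag, huN, huv]
      · simp [hsome]
    rw [this]
    exact (D.bag_conn w).induce_image φ

def extend (D : TreeDecomp (G.induce {v}ᶜ) ι) (i₀ : ι)
    (hi₀ : G.neighborSet v ⊆ Subtype.val '' D.bag i₀) : TreeDecomp G (Option ι) where
  tree := D.tree.map Function.Embedding.some ⊔ edge none (some i₀)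
  isTree := D.isTree.map_some_sup_edge i₀
  bag := D.extendBag
  bag_conn := D.connected_extend hi₀
  bag_edge a b hab := by
    by_cases ha : a = v
    · subst ha
      exact ⟨none, Set.mem_insert _ _, Set.mem_insert_of_mem _ hab⟩
    by_cases hb : b = v
    · subst hb
      exact ⟨none, Set.mem_insert_of_mem _ hab.symm, Set.mem_insert _ _⟩
    obtain ⟨i, hai, hbi⟩ := D.bag_edge (u := ⟨a, ha⟩) (v := ⟨b, hb⟩) hab
    exact ⟨some i, ⟨_, hai, rfl⟩, ⟨_, hbi, rfl⟩⟩

end TreeDecomp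

namespace IsChordal

variable {V : Type*} {G : SimpleGraph V}

theorem exists_treeDecomp_isClique [Finite V] (hG : IsChordal G) :
    ∃ (ι : Type) (_ : Fintype ι) (D : TreeDecomp G ι),
      (∀ i, G.IsClique (D.bag i)) ∧ ∀ K, G.IsClique K → ∃ i, K ⊆ D.bag i := by
  induction hn : Nat.card V using Nat.strong_induction_on generalizing V with
  | _ n ih =>
  rcases isEmpty_or_nonempty V with hV | ⟨⟨v₀⟩⟩
  · refine ⟨Unit, inferInstance, ⟨⊥, .of_subsingleton, fun _ ↦ ∅, isEmptyElim, isEmptyElim⟩,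
      fun _ ↦ Set.pairwise_empty _, fun K _ ↦ ⟨(), ?_⟩⟩
    simp [Set.eq_empty_of_isEmpty K]
  obtain ⟨v, hv⟩ : ∃ v, G.IsSimplicial v := by
    rcases hG.eq_top_or_exists_isSimplicial_pair with rfl | ⟨x, -, -, -, hx, -⟩
    exacts [⟨v₀, isSimplicial_top v₀⟩, ⟨x, hx⟩]
  obtain ⟨ι, _, D, hbag, hcover⟩ :=
    ih _ (hn ▸ Finite.card_subtype_lt (x := v) (by simp)) (hG.induce {v}ᶜ) rfl
  obtain ⟨i₀, hi₀⟩ := hcover {w | ↑w ∈ G.neighborSet v} <| isClique_induce_iff.2 <|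
    hv.subset (Set.image_preimage_subset _ _)
  refine ⟨Option ι, inferInstance, D.extend i₀ fun u hu ↦ ?_, ?_, fun K hK ↦ ?_⟩
  · exact ⟨⟨u, (G.ne_of_adj hu).symm⟩, hi₀ hu, rfl⟩
  · rintro (_ | i)
    · exact hv.insert fun _ hb _ ↦ hb
    · exact isClique_induce_iff.1 (hbag i)
  by_cases hvK : v ∈ K
  · refine ⟨none, fun u hu ↦ ?_⟩
    obtain rfl | huv := eq_or_ne u v
    exacts [Set.mem_insert _ _, Set.mem_insert_of_mem _ (hK hvK hu huv.symm)]
  · obtain ⟨i, hi⟩ := hcover (Subtype.val ⁻¹' K) <| isClique_induce_iff.2 <|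
      hK.subset (Set.image_preimage_subset _ _)
    exact ⟨some i, fun u hu ↦ ⟨⟨u, fun h ↦ hvK (h ▸ hu)⟩, hi hu, rfl⟩⟩

end IsChordal

theorem stmt_10 {V : Type u} [Fintype V] (G : SimpleGraph V) [DecidableRel G.Adj]
    (Δ : ℕ) (hΔ : G.maxDegree = Δ) (hchordal : IsChordal G) :
    treewidth G ≤ Δ ∧
    ∃ S : Set V, G.IsClique S ∧ S.ncard ≤ Δ + 1 ∧
      ∀ c : (G.induce Sᶜ).ConnectedComponent, 2 * c.supp.ncard ≤ Fintype.card V := by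
  obtain ⟨ι, hι, D, hclique, -⟩ := hchordal.exists_treeDecomp_isClique
  have hbag : ∀ i, (D.bag i).ncard ≤ Δ + 1 :=
    fun i ↦ hΔ ▸ (hclique i).ncard_le_maxDegree_add_one
  obtain ⟨i, hi⟩ := D.exists_balanced_bag
  exact ⟨Nat.sInf_le ⟨ι, hι, D, hbag⟩, D.bag i, hclique i, hbag i, hi⟩
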